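/- arXiv:1904.06745 — 2 statements merged into one kernel-verified Lean document; each statement's English description precedes it below -/
import Mathlib

section
/- Fix a constant C1 ≥ 1. There exist c > 0 and N such that for all n ≥ N the following holds: let θ be the smallest integer greater than n/2 such that Pr_{x uniform on {0,1}^n}[L(x) > θ] ≤ 1/n^{C1}, and let f0 : {0,1}^n → {0,1} be defined by f0(x) = 1 if and only if L(x) > θ. Then for every δ with 1/n ≤ δ ≤ 1/2, c/n^{C1+1} ≤ NS_δ[f0] ≤ 2/n^{C1}. -/
open Finset

/-- Level (Hamming weight) of a point of the Boolean cube. -/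
def level {n : ℕ} (x : Fin n → Bool) : ℕ :=
  (Finset.univ.filter (fun i => x i = true)).card

/-- Probability, under the noise distribution `T_δ`, of obtaining the pair `(x, z)`:
`x` is uniform on `{0,1}^n` and each coordinate of `z` independently equals the
corresponding coordinate of `x` with probability `1 − δ` and is flipped with
probability `δ`. -/
noncomputable def noisePairProb (n : ℕ) (δ : ℝ) (x z : Fin n → Bool) : ℝ :=
  (1 / 2 ^ n) * ∏ i : Fin n, (if z i = x i then 1 - δ else δ)

/-- Noise sensitivity: `NS_δ[f] = Pr_{(x,z)∼T_δ}[f(x) ≠ f(z)]`. -/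
noncomputable def NS (n : ℕ) (δ : ℝ) (f : (Fin n → Bool) → Bool) : ℝ :=
  ∑ x : Fin n → Bool, ∑ z : Fin n → Bool,
    noisePairProb n δ x z * (if f x ≠ f z then 1 else 0)

/-- Influence: `I[f] = n · Pr_{x, i}[f(x) ≠ f(x^{⊕i})]`. -/
noncomputable def influence (n : ℕ) (f : (Fin n → Bool) → Bool) : ℝ :=
  (1 / 2 ^ n) * ∑ x : Fin n → Bool, ∑ i : Fin n,
    (if f x ≠ f (Function.update x i (!(x i))) then (1 : ℝ) else 0)

/-- Bias: `B[f] = Pr_{x uniform}[f(x) = 1]`. -/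
noncomputable def bias (n : ℕ) (f : (Fin n → Bool) → Bool) : ℝ :=
  (1 / 2 ^ n) * ∑ x : Fin n → Bool, (if f x = true then (1 : ℝ) else 0)

/-- `tailProb n θ = Pr_{x uniform on {0,1}^n}[L(x) > θ]`. -/
noncomputable def tailProb (n θ : ℕ) : ℝ :=
  (1 / 2 ^ n) * ∑ x : Fin n → Bool, (if θ < level x then (1 : ℝ) else 0)

/-- `isMinimalThreshold C1 n θ` says that `θ` is the smallest integer greater than
`n/2` such that `Pr[L(x) > θ] ≤ 1/n^{C1}`. -/
def isMinimalThreshold (C1 : ℝ) (n θ : ℕ) : Prop :=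
  (n : ℝ) / 2 < (θ : ℝ) ∧ tailProb n θ ≤ 1 / (n : ℝ) ^ C1 ∧
    ∀ θ' : ℕ, (n : ℝ) / 2 < (θ' : ℝ) → tailProb n θ' ≤ 1 / (n : ℝ) ^ C1 → θ ≤ θ'


/-!
The upper bound holds for every Boolean function `f`: `f x ≠ f z` forces `f x = 1` or `f z = 1`,
and `x`, `z` are both uniform, so `NS_δ[f] ≤ 2 Pr[f = 1]`. For the lower bound, expanding the
noise kernel in the Walsh basis gives `NS_δ[f] = (1 - ∑_S (1 - 2δ)^|S| f̂(S)²) / 2`, and with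
Parseval this yields `NS_δ[f] ≥ 4δ p (1 - p)` for `p = Pr[f = 1]`. It remains to see that
`p ≥ 1 / (36 n^C1)` for the threshold function. Minimality of `θ` gives
`Pr[L > θ - 1] ≥ 1 / (4 n^C1)`: either `θ - 1 > n/2` and the threshold `θ - 1` was rejected, or
`θ - 1 = ⌊n/2⌋` and the tail is at least `1 / (2(n + 1))`. Since `3^θ Pr[L ≥ θ] ≤ 2^n`, this
forces `θ < 3n/4` for large `n`, where consecutive binomial coefficients have ratio at most `8`,
so `Pr[L > θ] ≥ Pr[L > θ - 1] / 9`.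
-/

namespace BoolCube

variable {n : ℕ}

noncomputable def sign (b : Bool) : ℝ := if b then -1 else 1

noncomputable def walsh (S : Finset (Fin n)) (x : Fin n → Bool) : ℝ :=
  ∏ i ∈ S, sign (x i)

noncomputable def fourierCoeff (F : (Fin n → Bool) → ℝ) (S : Finset (Fin n)) : ℝ :=
  (1 / 2 ^ n) * ∑ x, F x * walsh S x

lemma sum_cube_const (c : ℝ) : ∑ _x : Fin n → Bool, c = 2 ^ n * c := by
  simp

lemma noisePairProb_comm (δ : ℝ) (x z : Fin n → Bool) :
    noisePairProb n δ x z = noisePairProb n δ z x := by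
  simp only [noisePairProb, eq_comm (a := z _)]

lemma noisePairProb_nonneg {δ : ℝ} (h₀ : 0 ≤ δ) (h₁ : δ ≤ 1) (x z : Fin n → Bool) :
    0 ≤ noisePairProb n δ x z :=
  mul_nonneg (by positivity) (prod_nonneg fun i _ => by split_ifs <;> linarith)

lemma sum_noisePairProb_right (δ : ℝ) (x : Fin n → Bool) :
    ∑ z, noisePairProb n δ x z = 1 / 2 ^ n := by
  simp only [noisePairProb, ← mul_sum]
  rw [← Fintype.prod_sum (fun i (b : Bool) => if b = x i then 1 - δ else δ)]
  simp only [Fintype.sum_bool]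
  rw [prod_eq_one fun i _ => by cases x i <;> simp, mul_one]

lemma noisePairProb_zero (x z : Fin n → Bool) :
    noisePairProb n 0 x z = if x = z then 1 / 2 ^ n else 0 := by
  simp only [noisePairProb, sub_zero, Fintype.prod_ite_zero, prod_const_one, funext_iff,
    eq_comm (a := z _)]
  split_ifs <;> simp

/-- The kernel of the noise operator factorises as `∏ᵢ (1 + ρ xᵢ zᵢ) / 2` in `±1` notation,
with `ρ = 1 - 2δ`. -/
lemma noisePairProb_eq_sum_walsh (δ : ℝ) (x z : Fin n → Bool) :
    noisePairProb n δ x z =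
      (1 / 2 ^ n) ^ 2 * ∑ S, (1 - 2 * δ) ^ #S * (walsh S x * walsh S z) := by
  have factor : ∀ i, (if z i = x i then 1 - δ else δ)
      = (1 + (1 - 2 * δ) * (sign (x i) * sign (z i))) / 2 := by
    intro i; cases x i <;> cases z i <;> norm_num [sign] <;> ring
  rw [noisePairProb, prod_congr rfl fun i _ => factor i, prod_div_distrib, prod_one_add,
    powerset_univ, prod_const, card_univ, Fintype.card_fin]
  simp only [prod_mul_distrib, prod_const, walsh]
  ring

theorem sum_noisePairProb_mul (δ : ℝ) (F G : (Fin n → Bool) → ℝ) :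
    ∑ x, ∑ z, noisePairProb n δ x z * (F x * G z) =
      ∑ S, (1 - 2 * δ) ^ #S * (fourierCoeff F S * fourierCoeff G S) := by
  calc ∑ x, ∑ z, noisePairProb n δ x z * (F x * G z)
      = ∑ x, ∑ z, ∑ S, (1 - 2 * δ) ^ #S *
          ((1 / 2 ^ n * (F x * walsh S x)) * (1 / 2 ^ n * (G z * walsh S z))) := by
        simp only [noisePairProb_eq_sum_walsh, mul_sum, sum_mul]
        exact sum_congr rfl fun x _ => sum_congr rfl fun z _ =>
          sum_congr rfl fun S _ => by ring
    _ = ∑ S, ∑ x, ∑ z, (1 - 2 * δ) ^ #S *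
          ((1 / 2 ^ n * (F x * walsh S x)) * (1 / 2 ^ n * (G z * walsh S z))) := by
        exact (sum_congr rfl fun x _ => sum_comm).trans sum_comm
    _ = _ := by
        refine sum_congr rfl fun S _ => ?_
        rw [fourierCoeff, fourierCoeff, mul_sum, mul_sum, sum_mul_sum, mul_sum]
        simp only [mul_sum]

theorem sum_fourierCoeff_mul (F G : (Fin n → Bool) → ℝ) :
    ∑ S, fourierCoeff F S * fourierCoeff G S = 1 / 2 ^ n * ∑ x, F x * G x := by
  have h := sum_noisePairProb_mul 0 F G
  simp only [noisePairProb_zero, ite_mul, zero_mul, sum_ite_eq, mem_univ, if_true, mul_zero,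
    sub_zero, one_pow, one_mul] at h
  rw [← h, mul_sum]

lemma sum_fourierCoeff_sign_sq (f : (Fin n → Bool) → Bool) :
    ∑ S, fourierCoeff (sign ∘ f) S ^ 2 = 1 := by
  have hsq : ∀ x, (sign ∘ f) x * (sign ∘ f) x = 1 := fun x => by
    simp only [Function.comp_apply]; cases f x <;> norm_num [sign]
  simp only [sq, sum_fourierCoeff_mul, hsq, sum_cube_const]
  field_simp

lemma fourierCoeff_sign_empty (f : (Fin n → Bool) → Bool) :
    fourierCoeff (sign ∘ f) ∅ = 1 - 2 * bias n f := by
  have hsign : ∀ x, (sign ∘ f) x = 1 - 2 * (if f x = true then 1 else 0) := fun x => by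
    simp only [Function.comp_apply]; cases f x <;> norm_num [sign]
  simp only [fourierCoeff, bias, walsh, prod_empty, mul_one, hsign, sum_sub_distrib,
    ← mul_sum, sum_cube_const]
  field_simp

lemma NS_eq_sum_fourierCoeff (δ : ℝ) (f : (Fin n → Bool) → Bool) :
    NS n δ f = (1 - ∑ S, (1 - 2 * δ) ^ #S * fourierCoeff (sign ∘ f) S ^ 2) / 2 := by
  have hne : ∀ x z, (if f x ≠ f z then (1 : ℝ) else 0)
      = (1 - (sign ∘ f) x * (sign ∘ f) z) / 2 := fun x z => by
    simp only [Function.comp_apply]; cases f x <;> cases f z <;> norm_num [sign]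
  have htotal : ∑ x, ∑ z, noisePairProb n δ x z = 1 := by
    simp only [sum_noisePairProb_right, sum_cube_const]
    field_simp
  simp only [sq, ← sum_noisePairProb_mul, NS, hne, mul_div, mul_sub, mul_one, ← sum_div,
    sum_sub_distrib, htotal]

theorem four_mul_bias_mul_one_sub_bias_le_NS {δ : ℝ} (h₀ : 0 ≤ δ) (h₁ : δ ≤ 1 / 2)
    (f : (Fin n → Bool) → Bool) :
    4 * δ * (bias n f * (1 - bias n f)) ≤ NS n δ f := by
  have hparseval := sum_fourierCoeff_sign_sq f
  have hempty := fourierCoeff_sign_empty f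
  rw [NS_eq_sum_fourierCoeff]
  set c := fourierCoeff (sign ∘ f)
  have hterm : ∀ S, (1 - 2 * δ) ^ #S * c S ^ 2
      ≤ (1 - 2 * δ) * c S ^ 2 + 2 * δ * (if ∅ = S then c S ^ 2 else 0) := by
    intro S
    rcases S.eq_empty_or_nonempty with rfl | hS
    · simp only [card_empty, pow_zero, if_true]
      linarith
    · rw [if_neg hS.ne_empty.symm]
      have := pow_le_of_le_one (a := 1 - 2 * δ) (by linarith) (by linarith) hS.card_pos.ne'
      nlinarith [sq_nonneg (c S)]
  have hsum := sum_le_sum fun S (_ : S ∈ univ) => hterm S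
  simp only [sum_add_distrib, ← mul_sum, sum_ite_eq, mem_univ, if_true, hparseval,
    hempty] at hsum
  nlinarith

theorem NS_le_two_mul_bias {δ : ℝ} (h₀ : 0 ≤ δ) (h₁ : δ ≤ 1) (f : (Fin n → Bool) → Bool) :
    NS n δ f ≤ 2 * bias n f := by
  have hmarginal :
      ∑ x, ∑ z, noisePairProb n δ x z * (if f x = true then 1 else 0) = bias n f := by
    simp only [← sum_mul, sum_noisePairProb_right, bias, mul_sum]
  calc NS n δ f
      ≤ ∑ x, ∑ z, (noisePairProb n δ x z * (if f x = true then 1 else 0)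
          + noisePairProb n δ z x * (if f z = true then 1 else 0)) := by
        refine sum_le_sum fun x _ => sum_le_sum fun z _ => ?_
        rw [noisePairProb_comm δ z x, ← mul_add]
        refine mul_le_mul_of_nonneg_left ?_ (noisePairProb_nonneg h₀ h₁ x z)
        cases f x <;> cases f z <;> simp
    _ = 2 * bias n f := by
        rw [sum_congr rfl fun x _ => sum_add_distrib, sum_add_distrib,
          sum_comm (f := fun x z => noisePairProb n δ z x * (if f z = true then (1 : ℝ) else 0)),
          hmarginal, two_mul]

end BoolCube

def tailCount (n m : ℕ) : ℕ := ∑ k ∈ Ioc m n, n.choose k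

lemma sum_level (n : ℕ) (g : ℕ → ℝ) :
    ∑ x : Fin n → Bool, g (level x) = ∑ k ∈ range (n + 1), (n.choose k : ℝ) * g k := by
  have hbij : ∑ x : Fin n → Bool, g (level x) = ∑ S ∈ (univ : Finset (Fin n)).powerset, g #S :=
    sum_nbij' (fun x => univ.filter (x · = true)) (fun S i => decide (i ∈ S))
      (by simp) (by simp) (fun x _ => by ext i; simp) (fun S _ => by ext i; simp)
      (fun x _ => rfl)
  rw [hbij, sum_powerset_apply_card, card_univ, Fintype.card_fin]
  simp only [nsmul_eq_mul]

lemma tailProb_eq_tailCount_div (n m : ℕ) : tailProb n m = tailCount n m / 2 ^ n := by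
  rw [tailProb, sum_level n (fun k => if m < k then 1 else 0), tailCount]
  simp only [mul_ite, mul_one, mul_zero, ← sum_filter]
  have hIoc : (range (n + 1)).filter (m < ·) = Ioc m n := by
    ext k; simp [and_comm]
  rw [hIoc]
  push_cast
  ring

lemma tailCount_eq_choose_add (n m : ℕ) :
    tailCount n m = n.choose (m + 1) + tailCount n (m + 1) := by
  rcases le_or_gt (m + 1) n with h | h
  · rw [tailCount, tailCount, ← Icc_add_one_left_eq_Ioc, Icc_eq_cons_Ioc h, sum_cons]
  · simp [tailCount, Nat.choose_eq_zero_of_lt h, Ioc_eq_empty_of_le (by omega : n ≤ m),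
      Ioc_eq_empty_of_le (by omega : n ≤ m + 1)]

lemma choose_le_mul_choose_succ {n k r : ℕ} (h : k + 1 ≤ r * (n - k)) :
    n.choose k ≤ r * n.choose (k + 1) := by
  rcases Nat.eq_zero_or_pos (n - k) with hnk | hnk
  · rw [hnk, mul_zero] at h; omega
  · refine Nat.le_of_mul_le_mul_right ?_ hnk
    calc n.choose k * (n - k) = n.choose (k + 1) * (k + 1) :=
          (Nat.choose_succ_right_eq n k).symm
      _ ≤ n.choose (k + 1) * (r * (n - k)) := Nat.mul_le_mul_left _ h
      _ = r * n.choose (k + 1) * (n - k) := by ring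

lemma tailCount_le_mul_tailCount_succ {n m r : ℕ} (h : m + 2 ≤ r * (n - (m + 1))) :
    tailCount n m ≤ (r + 1) * tailCount n (m + 1) := by
  have hmn : m + 2 ≤ n := by
    rcases Nat.eq_zero_or_pos (n - (m + 1)) with h0 | h0
    · rw [h0, mul_zero] at h; omega
    · omega
  have hchoose : n.choose (m + 2) ≤ tailCount n (m + 1) :=
    single_le_sum (f := n.choose) (fun _ _ => Nat.zero_le _) (mem_Ioc.mpr ⟨by omega, hmn⟩)
  rw [tailCount_eq_choose_add]
  nlinarith [choose_le_mul_choose_succ h]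

lemma two_pow_le_succ_mul_choose_half (n : ℕ) : 2 ^ n ≤ (n + 1) * n.choose (n / 2) := by
  rw [← Nat.sum_range_choose]
  simpa using sum_le_card_nsmul (range (n + 1)) _ _ fun k _ => Nat.choose_le_middle k n

lemma two_pow_le_tailCount_half {n : ℕ} (hn : 1 ≤ n) :
    2 ^ n ≤ 2 * (n + 1) * tailCount n (n / 2) := by
  have hhalf : n.choose (n / 2) ≤ 2 * n.choose (n / 2 + 1) :=
    choose_le_mul_choose_succ (by omega)
  have hchoose : n.choose (n / 2 + 1) ≤ tailCount n (n / 2) :=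
    single_le_sum (f := n.choose) (fun _ _ => Nat.zero_le _) (mem_Ioc.mpr ⟨by omega, by omega⟩)
  nlinarith [two_pow_le_succ_mul_choose_half n]

/-- Markov's inequality for `3 ^ L(x)`, whose sum over the cube is `4 ^ n`. -/
lemma three_pow_mul_tailCount_le (n m : ℕ) : 3 ^ (m + 1) * tailCount n m ≤ 4 ^ n :=
  calc 3 ^ (m + 1) * tailCount n m
      = ∑ k ∈ Ioc m n, 3 ^ (m + 1) * n.choose k := by rw [tailCount, mul_sum]
    _ ≤ ∑ k ∈ Ioc m n, 3 ^ k * n.choose k :=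
        sum_le_sum fun k hk => Nat.mul_le_mul_right _ (Nat.pow_le_pow_right (by norm_num)
          (mem_Ioc.mp hk).1)
    _ ≤ ∑ k ∈ range (n + 1), 3 ^ k * n.choose k :=
        sum_le_sum_of_subset fun k hk => by
          simp only [mem_Ioc] at hk; simp only [mem_range]; omega
    _ = 4 ^ n := by
        rw [show 4 = 3 + 1 by rfl, add_pow]; simp

lemma one_div_le_tailProb_half {n : ℕ} (hn : 1 ≤ n) :
    1 / (2 * (n + 1)) ≤ tailProb n (n / 2) := by
  rw [tailProb_eq_tailCount_div, div_le_div_iff₀ (by positivity) (by positivity), one_mul]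
  exact_mod_cast (two_pow_le_tailCount_half hn).trans_eq (mul_comm _ _)

lemma tailProb_le_mul_tailProb_succ {n m r : ℕ} (h : m + 2 ≤ r * (n - (m + 1))) :
    tailProb n m ≤ (r + 1) * tailProb n (m + 1) := by
  simp only [tailProb_eq_tailCount_div, ← mul_div_assoc]
  gcongr
  exact_mod_cast tailCount_le_mul_tailCount_succ h

lemma three_pow_mul_tailProb_le (n m : ℕ) : 3 ^ (m + 1) * tailProb n m ≤ 2 ^ n := by
  rw [tailProb_eq_tailCount_div, ← mul_div_assoc, div_le_iff₀ (by positivity), ← pow_add,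
    ← two_mul, pow_mul]
  exact_mod_cast three_pow_mul_tailCount_le n m

lemma bias_threshold (n θ : ℕ) : bias n (fun x => decide (θ < level x)) = tailProb n θ := by
  simp [bias, tailProb]

open Filter in
lemma eventually_mul_rpow_mul_pow_lt (K s : ℝ) {a b : ℝ} (ha : 0 < a) (hab : a < b) :
    ∀ᶠ n : ℕ in atTop, K * (n : ℝ) ^ s * a ^ n < b ^ n := by
  have hlim := (tendsto_pow_const_div_const_pow_of_one_lt ⌈s⌉₊
    ((one_lt_div ha).mpr hab)).const_mul |K|
  rw [mul_zero] at hlim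
  filter_upwards [hlim.eventually_lt_const one_pos, eventually_ge_atTop 1] with n hn hn1
  have hn1' : (1 : ℝ) ≤ n := by exact_mod_cast hn1
  have hrpow : (n : ℝ) ^ s ≤ (n : ℝ) ^ ⌈s⌉₊ := by
    rw [← Real.rpow_natCast]
    exact Real.rpow_le_rpow_of_exponent_le hn1' (Nat.le_ceil s)
  rw [div_pow, div_div_eq_mul_div, ← mul_div_assoc, div_lt_one (pow_pos (ha.trans hab) n)] at hn
  calc K * (n : ℝ) ^ s * a ^ n ≤ |K| * (n : ℝ) ^ ⌈s⌉₊ * a ^ n := by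
        gcongr
        exact le_abs_self K
    _ < b ^ n := (mul_assoc _ _ _).trans_lt hn

namespace isMinimalThreshold

variable {C1 : ℝ} {n θ : ℕ}

lemma le_tailProb_pred (hC1 : 1 ≤ C1) (hn : 1 ≤ n) (h : isMinimalThreshold C1 n θ) :
    1 / (4 * (n : ℝ) ^ C1) ≤ tailProb n (θ - 1) := by
  obtain ⟨hhalf, -, hmin⟩ := h
  have hθ : n < 2 * θ := by exact_mod_cast (by linarith : (n : ℝ) < 2 * θ)
  have hn' : (1 : ℝ) ≤ n := by exact_mod_cast hn
  have hrpow : (n : ℝ) ≤ (n : ℝ) ^ C1 := by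
    simpa using Real.rpow_le_rpow_of_exponent_le hn' hC1
  rcases (by omega : θ - 1 = n / 2 ∨ n < 2 * (θ - 1)) with heq | hlt
  · rw [heq]
    refine le_trans (one_div_le_one_div_of_le (by positivity) ?_) (one_div_le_tailProb_half hn)
    linarith
  · have hpred : 1 / (n : ℝ) ^ C1 < tailProb n (θ - 1) := by
      by_contra! hle
      have hcast : (n : ℝ) < 2 * ((θ - 1 : ℕ) : ℝ) := by exact_mod_cast hlt
      have := hmin (θ - 1) (by linarith) hle
      omega
    refine le_trans ?_ hpred.le
    gcongr
    linarith

lemma four_mul_lt_three_mul (hC1 : 1 ≤ C1) (hn : 1 ≤ n)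
    (hbig : 256 * (n : ℝ) ^ (4 * C1) * 16 ^ n < 27 ^ n) (h : isMinimalThreshold C1 n θ) :
    4 * θ < 3 * n := by
  by_contra! hθ
  have hθ1 : 1 ≤ θ := by omega
  have hnC1 : (0 : ℝ) < (n : ℝ) ^ C1 := by positivity
  have hthree : (3 : ℝ) ^ θ ≤ 4 * (n : ℝ) ^ C1 * 2 ^ n := by
    have hmarkov := three_pow_mul_tailProb_le n (θ - 1)
    rw [Nat.sub_add_cancel hθ1] at hmarkov
    have := mul_le_mul_of_nonneg_left (h.le_tailProb_pred hC1 hn)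
      (by positivity : (0 : ℝ) ≤ 3 ^ θ)
    rw [← mul_div_assoc, mul_one, div_le_iff₀ (by positivity)] at this
    nlinarith
  have : (27 : ℝ) ^ n < 27 ^ n :=
    calc (27 : ℝ) ^ n = 3 ^ (3 * n) := by rw [pow_mul]; norm_num
      _ ≤ 3 ^ (4 * θ) := pow_le_pow_right₀ (by norm_num) hθ
      _ = ((3 : ℝ) ^ θ) ^ 4 := by rw [mul_comm, pow_mul]
      _ ≤ (4 * (n : ℝ) ^ C1 * 2 ^ n) ^ 4 := by gcongr
      _ = 256 * (n : ℝ) ^ (4 * C1) * 16 ^ n := by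
        have hpow4 : ((n : ℝ) ^ C1) ^ 4 = (n : ℝ) ^ (4 * C1) := by
          rw [← Real.rpow_mul_natCast (by positivity)]; ring_nf
        rw [mul_pow, mul_pow, hpow4, ← pow_mul, mul_comm n 4, pow_mul]
        norm_num
      _ < 27 ^ n := hbig
  exact lt_irrefl _ this

lemma le_tailProb (hC1 : 1 ≤ C1) (hn : 1 ≤ n)
    (hbig : 256 * (n : ℝ) ^ (4 * C1) * 16 ^ n < 27 ^ n) (h : isMinimalThreshold C1 n θ) :
    1 / (36 * (n : ℝ) ^ C1) ≤ tailProb n θ := by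
  have hθ := h.four_mul_lt_three_mul hC1 hn hbig
  have hθ1 : 1 ≤ θ := by
    have := h.1
    have : (0 : ℝ) < θ := by linarith [(by positivity : (0 : ℝ) ≤ n / 2)]
    exact_mod_cast this
  have hratio := tailProb_le_mul_tailProb_succ (n := n) (m := θ - 1) (r := 8) (by omega)
  rw [Nat.sub_add_cancel hθ1] at hratio
  have := h.le_tailProb_pred hC1 hn
  calc 1 / (36 * (n : ℝ) ^ C1) = 1 / (4 * (n : ℝ) ^ C1) / 9 := by ring
    _ ≤ tailProb n θ := by
      rw [div_le_iff₀ (by norm_num)]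
      push_cast at hratio
      linarith

end isMinimalThreshold

open BoolCube

/-- Fix `C1 ≥ 1`. There exist `c > 0` and `N` such that for all `n ≥ N`: if `θ` is
the smallest integer greater than `n/2` with `Pr[L(x) > θ] ≤ 1/n^{C1}`, and
`f0(x) = 1 ↔ L(x) > θ`, then for every `δ` with `1/n ≤ δ ≤ 1/2`,
`c/n^{C1+1} ≤ NS_δ[f0] ≤ 2/n^{C1}`. -/
theorem threshold_noise_sensitivity_bounds (C1 : ℝ) (hC1 : 1 ≤ C1) :
    ∃ c : ℝ, 0 < c ∧ ∃ N : ℕ, ∀ n : ℕ, N ≤ n → ∀ θ : ℕ, isMinimalThreshold C1 n θ →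
      ∀ δ : ℝ, 1 / (n : ℝ) ≤ δ → δ ≤ 1 / 2 →
        c / (n : ℝ) ^ (C1 + 1) ≤ NS n δ (fun x => decide (θ < level x)) ∧
          NS n δ (fun x => decide (θ < level x)) ≤ 2 / (n : ℝ) ^ C1 := by
  obtain ⟨N, hN⟩ := (eventually_mul_rpow_mul_pow_lt 256 (4 * C1) (by norm_num : (0 : ℝ) < 16)
    (by norm_num : (16 : ℝ) < 27)).exists_forall_of_atTop
  refine ⟨1 / 18, by norm_num, max N 2, fun n hn θ hθ δ hδ₁ hδ₂ => ?_⟩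
  have hn2 : (2 : ℝ) ≤ n := by exact_mod_cast le_of_max_le_right hn
  have hδ₀ : 0 ≤ δ := le_trans (by positivity) hδ₁
  have hlower := hθ.le_tailProb hC1 (by omega) (hN n (le_of_max_le_left hn))
  have hupper := hθ.2.1
  have hsmall : 1 / (n : ℝ) ^ C1 ≤ 1 / 2 := by
    refine one_div_le_one_div_of_le (by norm_num) (hn2.trans ?_)
    simpa using Real.rpow_le_rpow_of_exponent_le (by linarith) hC1
  have hpos : 0 ≤ tailProb n θ := le_trans (by positivity) hlower
  set f0 : (Fin n → Bool) → Bool := fun x => decide (θ < level x)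
  have hNS_lower := four_mul_bias_mul_one_sub_bias_le_NS hδ₀ hδ₂ f0
  have hNS_upper := NS_le_two_mul_bias hδ₀ (by linarith) f0
  rw [bias_threshold] at hNS_lower hNS_upper
  constructor
  · calc 1 / 18 / (n : ℝ) ^ (C1 + 1)
          = 4 * (1 / n) * (1 / (36 * (n : ℝ) ^ C1) * (1 / 2)) := by
          rw [Real.rpow_add_one (by positivity)]; ring
      _ ≤ 4 * δ * (tailProb n θ * (1 - tailProb n θ)) := by gcongr; linarith
      _ ≤ _ := hNS_lower
  · calc _ ≤ 2 * tailProb n θ := hNS_upper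
      _ ≤ 2 * (1 / (n : ℝ) ^ C1) := by gcongr
      _ = 2 / (n : ℝ) ^ C1 := mul_one_div 2 _
end

section
/- Fix a constant C2 ≥ 0. There exist c > 0 and N such that for all n ≥ N the following holds: let s = ⌊√n⌋ and m = ⌈2^s/n^{C2}⌉; let S_1, …, S_m be independent uniformly random s-element subsets of [n], and let x be uniform on {0,1}^n, independent of the S_j. Then Pr[∃ j ∈ [m] such that x_i = 1 for all i ∈ S_j] ≥ c/n^{C2}. Equivalently, the random DNF f(x) = ∨_j ∧_{i∈S_j} x_i satisfies E[B[f]] ≥ c/n^{C2}. -/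
open Finset

/-- The set of all tuples of `m` clauses, each clause an `s`-element subset of `[n]`. -/
def clauseTuples (n m s : ℕ) : Finset (Fin m → Finset (Fin n)) :=
  Finset.univ.filter (fun S => ∀ j, (S j).card = s)

/-- The DNF determined by the clause tuple `S`: `f(x) = 1` iff there is `j` with
`x_i = 1` for all `i ∈ S j`. -/
def dnfF (n m : ℕ) (S : Fin m → Finset (Fin n)) : (Fin n → Bool) → Bool :=
  fun x => decide (∃ j, ∀ i ∈ S j, x i = true)

/-!
Averaging over the clauses first, a point `x` of weight `w` satisfies the random DNF with
probability `1 - (1 - p)^m`, where `p = C(w,s)/C(n,s)`. On the half of the cube where `2w ≥ n`,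
`p ≥ ((w+1-s)/n)^s ≥ 2^{-s} (1 - 2s/n)^s ≥ 2^{-s} e^{-4s²/n} ≥ e^{-4} 2^{-s}` because `s² ≤ n`,
so `mp ≥ e^{-4}/n^{C2}`. Finally `1 - (1-p)^m ≥ mp/(1+mp)`, since
`(1-p)^m (1+mp) ≤ (1-p)^m (1+p)^m = (1-p²)^m ≤ 1` by Bernoulli's inequality.
-/

open Real

lemma card_clauseTuples (n m s : ℕ) : #(clauseTuples n m s) = n.choose s ^ m := by
  have : clauseTuples n m s
      = Fintype.piFinset fun _ : Fin m => (univ : Finset (Fin n)).powersetCard s := by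
    ext S
    simp [clauseTuples, Fintype.mem_piFinset]
  simp [this, Fintype.card_piFinset, card_powersetCard]

lemma level_le {n : ℕ} (x : Fin n → Bool) : level x ≤ n :=
  (card_filter_le _ _).trans_eq (card_fin n)

lemma level_not_add_level {n : ℕ} (x : Fin n → Bool) : level (fun i => !x i) + level x = n := by
  simpa [level, add_comm] using
    card_filter_add_card_filter_not (s := (univ : Finset (Fin n))) (p := fun i => x i = true)

lemma card_powersetCard_filter_not_forall {n : ℕ} (s : ℕ) (x : Fin n → Bool) :
    #{T ∈ (univ : Finset (Fin n)).powersetCard s | ¬ ∀ i ∈ T, x i = true}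
      = n.choose s - (level x).choose s := by
  have hsat : {T ∈ (univ : Finset (Fin n)).powersetCard s | ∀ i ∈ T, x i = true}
      = (univ.filter fun i => x i = true).powersetCard s := by
    ext T
    simp [mem_powersetCard, subset_iff, and_comm]
  have := card_filter_add_card_filter_not
    (s := (univ : Finset (Fin n)).powersetCard s) (p := fun T => ∀ i ∈ T, x i = true)
  rw [hsat, card_powersetCard, card_powersetCard, card_univ, Fintype.card_fin] at this
  rw [level]
  omega

lemma card_filter_not_dnfF (n m s : ℕ) (x : Fin n → Bool) :
    #{S ∈ clauseTuples n m s | ¬ dnfF n m S x = true} = (n.choose s - (level x).choose s) ^ m := by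
  have : {S ∈ clauseTuples n m s | ¬ dnfF n m S x = true}
      = Fintype.piFinset fun _ : Fin m =>
          {T ∈ (univ : Finset (Fin n)).powersetCard s | ¬ ∀ i ∈ T, x i = true} := by
    ext S
    simp only [clauseTuples, dnfF, mem_filter, mem_univ, true_and, Fintype.mem_piFinset,
      mem_powersetCard_univ, decide_eq_true_eq, not_exists, forall_and]
  rw [this, Fintype.card_piFinset, prod_const, card_univ, Fintype.card_fin,
    card_powersetCard_filter_not_forall]

lemma card_filter_dnfF (n m s : ℕ) (x : Fin n → Bool) :
    (#{S ∈ clauseTuples n m s | dnfF n m S x = true} : ℝ)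
      = (n.choose s : ℝ) ^ m - ((n.choose s : ℝ) - (level x).choose s) ^ m := by
  have hsplit := card_filter_add_card_filter_not
    (s := clauseTuples n m s) (p := fun S => dnfF n m S x = true)
  rw [card_filter_not_dnfF, card_clauseTuples] at hsplit
  have hle : (level x).choose s ≤ n.choose s := Nat.choose_le_choose s (level_le x)
  rw [← Nat.cast_sub hle, eq_sub_iff_add_eq]
  exact_mod_cast hsplit

lemma sum_bias_dnfF_div_card {n s : ℕ} (m : ℕ) (hs : s ≤ n) :
    (∑ S ∈ clauseTuples n m s, bias n (dnfF n m S)) / #(clauseTuples n m s)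
      = (∑ x : Fin n → Bool, (1 - (1 - ((level x).choose s : ℝ) / n.choose s) ^ m)) / 2 ^ n := by
  have hM : (n.choose s : ℝ) ≠ 0 := by exact_mod_cast (Nat.choose_pos hs).ne'
  have hswap : ∑ S ∈ clauseTuples n m s, bias n (dnfF n m S)
      = (∑ x : Fin n → Bool, (#{S ∈ clauseTuples n m s | dnfF n m S x = true} : ℝ)) / 2 ^ n := by
    simp only [bias, ← mul_sum]
    rw [sum_comm]
    simp only [sum_boole]
    ring
  rw [hswap, div_right_comm, card_clauseTuples, sum_div]
  congr 1
  refine sum_congr rfl fun x _ => ?_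
  rw [card_filter_dnfF, Nat.cast_pow, sub_div, div_self (pow_ne_zero m hM), ← div_pow, sub_div,
    div_self hM]

lemma two_pow_le_two_mul_card_filter_level (n : ℕ) :
    2 ^ n ≤ 2 * #{x : Fin n → Bool | n ≤ 2 * level x} := by
  have hsplit := card_filter_add_card_filter_not
    (s := (univ : Finset (Fin n → Bool))) (p := fun x => n ≤ 2 * level x)
  have hlow : #{x : Fin n → Bool | ¬ n ≤ 2 * level x} ≤ #{x : Fin n → Bool | n ≤ 2 * level x} := by
    refine card_le_card_of_injOn (fun x i => !x i) (fun x hx => ?_) (fun x _ y _ hxy => ?_)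
    · simp only [coe_filter, mem_univ, true_and, Set.mem_ofPred_eq] at hx ⊢
      have := level_not_add_level x
      omega
    · funext i
      simpa using congrFun hxy i
  simp only [card_univ, Fintype.card_fun, Fintype.card_bool, Fintype.card_fin] at hsplit
  omega

lemma half_le_average_of_upper_half {n : ℕ} {g : (Fin n → Bool) → ℝ} {b : ℝ}
    (hg : ∀ x, 0 ≤ g x) (hb : ∀ x, n ≤ 2 * level x → b ≤ g x) (hb₀ : 0 ≤ b) :
    b / 2 ≤ (∑ x, g x) / 2 ^ n := by
  have hcard : (2 : ℝ) ^ n ≤ 2 * #{x : Fin n → Bool | n ≤ 2 * level x} := by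
    exact_mod_cast two_pow_le_two_mul_card_filter_level n
  have hsum : #{x : Fin n → Bool | n ≤ 2 * level x} * b ≤ ∑ x, g x :=
    calc _ = ∑ x ∈ univ.filter fun x : Fin n → Bool => n ≤ 2 * level x, b := by
          rw [sum_const, nsmul_eq_mul]
      _ ≤ ∑ x ∈ univ.filter fun x : Fin n → Bool => n ≤ 2 * level x, g x :=
          sum_le_sum fun x hx => hb x (mem_filter.1 hx).2
      _ ≤ ∑ x, g x := sum_le_sum_of_subset_of_nonneg (filter_subset _ _) fun x _ _ => hg x
  rw [le_div_iff₀ (by positivity)]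
  nlinarith

lemma pow_mul_choose_le_choose_mul_pow (n w s : ℕ) :
    (w + 1 - s) ^ s * n.choose s ≤ w.choose s * n ^ s := by
  have h := Nat.mul_le_mul (w.pow_sub_le_descFactorial s) (n.descFactorial_le_pow s)
  rw [Nat.descFactorial_eq_factorial_mul_choose, Nat.descFactorial_eq_factorial_mul_choose] at h
  refine Nat.le_of_mul_le_mul_left (c := s.factorial) ?_ s.factorial_pos
  linarith [h]

lemma exp_neg_two_mul_le_one_sub {a : ℝ} (ha₀ : 0 ≤ a) (ha : a ≤ 1 / 2) :
    exp (-(2 * a)) ≤ 1 - a := by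
  rw [exp_neg, inv_le_iff_one_le_mul₀ (exp_pos _)]
  nlinarith [add_one_le_exp (2 * a)]

lemma exp_div_two_pow_le_choose_div_choose {n w s : ℕ} (hw : n ≤ 2 * w) (hs : 4 * s ≤ n) :
    exp (-(4 * s ^ 2 / n)) / 2 ^ s ≤ (w.choose s : ℝ) / n.choose s := by
  rcases Nat.eq_zero_or_pos n with rfl | hn
  · obtain rfl : s = 0 := by omega
    simp
  have hnR : (0 : ℝ) < n := by exact_mod_cast hn
  have hM : (0 : ℝ) < n.choose s := by exact_mod_cast Nat.choose_pos (by omega)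
  set a : ℝ := 2 * s / n
  have ha₀ : 0 ≤ a := by positivity
  have ha : a ≤ 1 / 2 := by
    rw [div_le_iff₀ hnR]
    have : (4 * s : ℝ) ≤ n := by exact_mod_cast hs
    linarith
  have hbase : (1 - a) / 2 ≤ ((w + 1 - s : ℕ) : ℝ) / n := by
    rw [Nat.cast_sub (by omega), div_le_div_iff₀ two_pos hnR]
    have : (n : ℝ) ≤ 2 * w := by exact_mod_cast hw
    simp only [a]
    push_cast
    field_simp
    linarith
  have hratio : (((w + 1 - s : ℕ) : ℝ) / n) ^ s ≤ (w.choose s : ℝ) / n.choose s := by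
    rw [div_pow, div_le_div_iff₀ (by positivity) hM]
    exact_mod_cast pow_mul_choose_le_choose_mul_pow n w s
  calc exp (-(4 * s ^ 2 / n)) / 2 ^ s = exp (-(2 * a)) ^ s / 2 ^ s := by
        rw [← exp_nat_mul]
        congr 2
        simp only [a]
        ring
    _ ≤ (1 - a) ^ s / 2 ^ s := by gcongr; exact exp_neg_two_mul_le_one_sub ha₀ ha
    _ = ((1 - a) / 2) ^ s := (div_pow _ _ _).symm
    _ ≤ (((w + 1 - s : ℕ) : ℝ) / n) ^ s := by gcongr; linarith
    _ ≤ (w.choose s : ℝ) / n.choose s := hratio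

lemma one_sub_pow_mul_one_add_mul_le_one {p : ℝ} (hp₀ : 0 ≤ p) (hp₁ : p ≤ 1) (m : ℕ) :
    (1 - p) ^ m * (1 + m * p) ≤ 1 :=
  calc (1 - p) ^ m * (1 + m * p) ≤ (1 - p) ^ m * (1 + p) ^ m :=
        mul_le_mul_of_nonneg_left (one_add_mul_le_pow (by linarith) m) (by bound)
    _ = (1 - p ^ 2) ^ m := by rw [← mul_pow]; ring
    _ ≤ 1 := pow_le_one₀ (by nlinarith) (by nlinarith)

lemma half_le_one_sub_one_sub_pow {p t : ℝ} {m : ℕ} (hp₀ : 0 ≤ p) (hp₁ : p ≤ 1)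
    (ht₀ : 0 ≤ t) (ht₁ : t ≤ 1) (htp : t ≤ m * p) :
    t / 2 ≤ 1 - (1 - p) ^ m := by
  have h := one_sub_pow_mul_one_add_mul_le_one hp₀ hp₁ m
  have hq : 0 ≤ (1 - p) ^ m := by bound
  nlinarith [mul_le_mul_of_nonneg_left htp hq]

lemma exp_neg_four_div_two_le_one_sub_pow {n w s m : ℕ} {K : ℝ} (hwn : w ≤ n) (hw : n ≤ 2 * w)
    (hss : s * s ≤ n) (hs : 4 * s ≤ n) (hK : 1 ≤ K) (hm : 2 ^ s / K ≤ m) :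
    exp (-4) / K / 2 ≤ 1 - (1 - (w.choose s : ℝ) / n.choose s) ^ m := by
  have hexp : exp (-4) ≤ exp (-(4 * s ^ 2 / n)) := by
    refine exp_le_exp.2 (neg_le_neg (div_le_of_le_mul₀ (by positivity) (by norm_num) ?_))
    have : ((s * s : ℕ) : ℝ) ≤ n := by exact_mod_cast hss
    push_cast at this
    nlinarith
  have hp := exp_div_two_pow_le_choose_div_choose hw hs
  refine half_le_one_sub_one_sub_pow (by positivity)
    (div_le_one_of_le₀ (by exact_mod_cast Nat.choose_le_choose s hwn) (by positivity))
    (by positivity) (div_le_one_of_le₀ ((exp_le_one_iff.2 (by norm_num)).trans hK) (by linarith)) ?_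
  calc exp (-4) / K = 2 ^ s / K * (exp (-4) / 2 ^ s) := by field_simp
    _ ≤ m * ((w.choose s : ℝ) / n.choose s) :=
      mul_le_mul hm ((div_le_div_of_nonneg_right hexp (by positivity)).trans hp) (by positivity)
        (by positivity)

/-- Fix `C2 ≥ 0`. There exist `c > 0` and `N` such that for all `n ≥ N`, with
`s = ⌊√n⌋` and `m = ⌈2^s/n^{C2}⌉`, the random DNF with `m` independent uniformly
random `s`-element clauses satisfies `E[B[f]] ≥ c/n^{C2}` (the expectation being
the average of `B[f_S]` over all clause tuples `S`). -/
theorem random_dnf_expected_bias (C2 : ℝ) (hC2 : 0 ≤ C2) :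
    ∃ c : ℝ, 0 < c ∧ ∃ N : ℕ, ∀ n : ℕ, N ≤ n →
      c / (n : ℝ) ^ C2 ≤
        (∑ S ∈ clauseTuples n ⌈(2 : ℝ) ^ Nat.sqrt n / (n : ℝ) ^ C2⌉₊ (Nat.sqrt n),
            bias n (dnfF n ⌈(2 : ℝ) ^ Nat.sqrt n / (n : ℝ) ^ C2⌉₊ S)) /
          ((clauseTuples n ⌈(2 : ℝ) ^ Nat.sqrt n / (n : ℝ) ^ C2⌉₊ (Nat.sqrt n)).card : ℝ) := by
  refine ⟨exp (-4) / 4, by positivity, 16, fun n hn => ?_⟩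
  set s := Nat.sqrt n
  set m := ⌈(2 : ℝ) ^ s / (n : ℝ) ^ C2⌉₊
  have hss : s * s ≤ n := Nat.sqrt_le n
  have hs : 4 ≤ s := Nat.le_sqrt.2 hn
  have hK : 1 ≤ (n : ℝ) ^ C2 := one_le_rpow (by exact_mod_cast (by omega : 1 ≤ n)) hC2
  rw [sum_bias_dnfF_div_card m (by nlinarith)]
  calc exp (-4) / 4 / (n : ℝ) ^ C2 = exp (-4) / (n : ℝ) ^ C2 / 2 / 2 := by ring
    _ ≤ _ := by
      refine half_le_average_of_upper_half (fun x => ?_) (fun x hx => ?_) (by positivity)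
      · have : ((level x).choose s : ℝ) ≤ n.choose s := by
          exact_mod_cast Nat.choose_le_choose s (level_le x)
        exact sub_nonneg.2 (pow_le_one₀ (sub_nonneg.2 (div_le_one_of_le₀ this (by positivity)))
          (sub_le_self _ (by positivity)))
      · exact exp_neg_four_div_two_le_one_sub_pow (level_le x) hx hss (by nlinarith) hK
          (Nat.le_ceil _)
end
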